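/- Let D- be a canonical negative Boolean automaton double-cycle with cycles of sizes n and m: f_c(x) = (¬x^ℓ_{n-1}) ∧ (¬x^r_{m-1}), other automata copy their predecessor. Then for every configuration x there is a sequence of at most 2n+m-2 asynchronous single-automaton updates transforming x into the all-zeros configuration (0^n, 0^m). -/

import Mathlib

/-- A configuration of a Boolean automaton double-cycle with cycles of sizes `n`
and `m`: the shared automaton `c` is index 0 of both cycles (so valid
configurations satisfy `x.1 0 = x.2 0`). -/
abbrev Cfg (n m : ℕ) := (Fin n → Bool) × (Fin m → Bool)

/-- One asynchronous single-automaton update in a double-cycle whose shared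
automaton `c` computes `fc`; every non-shared automaton copies its predecessor. -/
inductive Step {n m : ℕ} (fc : Cfg n m → Bool) : Cfg n m → Cfg n m → Prop
  | left (x : Cfg n m) (i : Fin n) (hi : 1 ≤ i.val) :
      Step fc x (Function.update x.1 i (x.1 ⟨i.val - 1, by have := i.isLt; omega⟩), x.2)
  | right (x : Cfg n m) (j : Fin m) (hj : 1 ≤ j.val) :
      Step fc x (x.1, Function.update x.2 j (x.2 ⟨j.val - 1, by have := j.isLt; omega⟩))
  | center (x : Cfg n m) (i : Fin n) (j : Fin m) (hi : i.val = 0) (hj : j.val = 0) :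
      Step fc x (Function.update x.1 i (fc x), Function.update x.2 j (fc x))

/-- `Steps fc k x y`: configuration `y` is obtained from `x` by exactly `k`
asynchronous single-automaton updates. -/
def Steps {n m : ℕ} (fc : Cfg n m → Bool) : ℕ → Cfg n m → Cfg n m → Prop
  | 0, x, y => x = y
  | k + 1, x, y => ∃ z, Step fc x z ∧ Steps fc k z y

/-!
If the shared automaton holds `b`, copying it along both cycles (first the left one, then the
right one, each automaton after its predecessor) makes the configuration constantly `b` in
`(n - 1) + (m - 1)` updates. So a configuration whose shared automaton holds `0` reaches `0^{n+m}`
directly. Otherwise, first copy the `1` along the left cycle: then `x^ℓ_{n-1} = 1`, so updating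
the shared automaton turns it to `0`, and `(n - 1) + 1 + (n - 1) + (m - 1) = 2n + m - 2` updates
suffice in total.
-/

namespace Steps

variable {n m : ℕ} {fc : Cfg n m → Bool}

theorem single {x y : Cfg n m} (h : Step fc x y) : Steps fc 1 x y :=
  ⟨y, h, rfl⟩

theorem trans {a b : ℕ} {x y z : Cfg n m} (hxy : Steps fc a x y) (hyz : Steps fc b y z) :
    Steps fc (a + b) x z := by
  induction a generalizing x with
  | zero =>
    cases hxy
    simpa using hyz
  | succ a ih =>
    obtain ⟨w, hxw, hwy⟩ := hxy
    rw [Nat.succ_add]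
    exact ⟨w, hxw, ih hwy⟩

end Steps

section Swap

variable {n m : ℕ} {fc : Cfg n m → Bool}

theorem Step.swap {x y : Cfg n m} (h : Step fc x y) :
    Step (fun z => fc z.swap) x.swap y.swap := by
  cases h with
  | left i hi => exact Step.right x.swap i hi
  | right j hj => exact Step.left x.swap j hj
  | center i j hi hj => exact Step.center x.swap j i hj hi

theorem Steps.swap {k : ℕ} {x y : Cfg n m} (h : Steps fc k x y) :
    Steps (fun z => fc z.swap) k x.swap y.swap := by
  induction k generalizing x with
  | zero => exact congrArg Prod.swap h
  | succ k ih =>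
    obtain ⟨z, hxz, hzy⟩ := h
    exact ⟨z.swap, hxz.swap, ih hzy⟩

end Swap

section Fill

variable {n m : ℕ} (fc : Cfg n m → Bool) (b : Bool)

theorem steps_left_const_of_prefix (k : ℕ) (hk : k < n) (x : Cfg n m)
    (hx : ∀ i : Fin n, i.val + k < n → x.1 i = b) :
    Steps fc k x (fun _ => b, x.2) := by
  induction k generalizing x with
  | zero => exact Prod.ext (funext fun i => hx i (by omega)) rfl
  | succ k ih =>
    let p : Fin n := ⟨n - 1 - k, by omega⟩
    refine ⟨_, Step.left x p (by simp only [p]; omega), ih (by omega) _ fun i hi => ?_⟩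
    by_cases hip : i = p
    · subst hip
      simp only [Function.update_self]
      exact hx _ (by simp only [p]; omega)
    · simp only [Function.update_of_ne hip]
      exact hx i (by simp only [p, Fin.ext_iff] at hip; omega)

theorem steps_left_const (hn : 0 < n) (x : Cfg n m) (hx : x.1 ⟨0, hn⟩ = b) :
    Steps fc (n - 1) x (fun _ => b, x.2) :=
  steps_left_const_of_prefix fc b (n - 1) (by omega) x fun i hi => by
    rwa [show i = ⟨0, hn⟩ from Fin.ext (by show i.val = 0; omega)]

theorem steps_right_const (hm : 0 < m) (x : Cfg n m) (hx : x.2 ⟨0, hm⟩ = b) :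
    Steps fc (m - 1) x (x.1, fun _ => b) :=
  (steps_left_const (fun z => fc z.swap) b hm x.swap hx).swap

theorem steps_const (hn : 0 < n) (hm : 0 < m) (x : Cfg n m)
    (hl : x.1 ⟨0, hn⟩ = b) (hr : x.2 ⟨0, hm⟩ = b) :
    Steps fc (n - 1 + (m - 1)) x (fun _ => b, fun _ => b) :=
  (steps_left_const fc b hn x hl).trans (steps_right_const fc b hm _ hr)

end Fill

/-- In a canonical negative double-cycle (f_c(x) = ¬x^ℓ_{n-1} ∧ ¬x^r_{m-1}), every
configuration reaches the all-zeros configuration in at most 2n+m-2 updates. -/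
theorem stmt10 (n m : ℕ) (hn : 0 < n) (hm : 0 < m) (x : Cfg n m)
    (hshare : x.1 ⟨0, hn⟩ = x.2 ⟨0, hm⟩) :
    ∃ k ≤ 2 * n + m - 2,
      Steps (fun y : Cfg n m => !(y.1 ⟨n - 1, by omega⟩) && !(y.2 ⟨m - 1, by omega⟩))
        k x ((fun _ => false, fun _ => false) : Cfg n m) := by
  set fc : Cfg n m → Bool := fun y => !(y.1 ⟨n - 1, by omega⟩) && !(y.2 ⟨m - 1, by omega⟩)
  cases hc : x.1 ⟨0, hn⟩ with
  | false => exact ⟨_, by omega, steps_const fc false hn hm x hc (hshare ▸ hc)⟩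
  | true =>
    have hfill := steps_left_const fc true hn x hc
    set y : Cfg n m := (fun _ => true, x.2)
    have hfy : fc y = false := by simp [fc, y]
    have hflip := Steps.single (Step.center (fc := fc) y ⟨0, hn⟩ ⟨0, hm⟩ rfl rfl)
    have hzero := steps_const fc false hn hm
      (Function.update y.1 ⟨0, hn⟩ (fc y), Function.update y.2 ⟨0, hm⟩ (fc y))
      (by simp [hfy]) (by simp [hfy])
    exact ⟨_, by omega, hfill.trans (hflip.trans hzero)⟩
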